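/- The language of the generalized Thue-Morse word t_{b,m} is invariant under each antimorphism Ψ_x defined letterwise by Ψ_x(k) = x − k (mod m) and reversing the order of letters: if w is a factor of t_{b,m}, then so is Ψ_x(w). -/

import Mathlib

open Filter Topology

def pref {A : Type*} (u : ℕ → A) (n : ℕ) : List A :=
  (List.range n).map u

def isFactor {A : Type*} (u : ℕ → A) (w : List A) : Prop :=
  ∃ i, w = (List.range w.length).map (fun j => u (i + j))

def occ {A : Type*} [DecidableEq A] (w v : List A) : ℕ :=
  (List.range (v.length + 1)).countP (fun i => decide ((v.drop i).take w.length = w))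

def freq {A : Type*} [DecidableEq A] (u : ℕ → A) (w : List A) (r : ℝ) : Prop :=
  Tendsto (fun n => (occ w (pref u n) : ℝ) / n) atTop (𝓝 r)

def phiL (b : ℕ) {m : ℕ} (k : ZMod m) : List (ZMod m) :=
  (List.range b).map (fun i => k + (i : ZMod m))

def phiW (b : ℕ) {m : ℕ} (s : List (ZMod m)) : List (ZMod m) :=
  s.flatMap (phiL b)

def isTM (b m : ℕ) (u : ℕ → ZMod m) : Prop :=
  u 0 = 0 ∧ ∀ n i, i < b → u (b * n + i) = u n + (i : ZMod m)

/-!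
`u k` is the sum of the base-`b` digits of `k`, reduced mod `m`. Inside a block of length
`b ^ L`, complementing every digit (`k ↦ b ^ L - 1 - k`) gives
`u (b ^ L - 1 - k) = L (b - 1) - u k`, and shifting the block to position `b ^ L * q` adds
`u q`. So mirroring the occurrence of `w` inside a large block reverses it and maps each letter
`k` to `L (b - 1) + u q - k`; since `u (b q + 1) = u q + 1`, `u` takes every value in `ZMod m`,
and `q` can be chosen to make this constant equal to `x`.
-/

theorem isFactor_iff_getElem {A : Type*} (u : ℕ → A) (w : List A) :
    isFactor u w ↔ ∃ i, ∀ k (hk : k < w.length), w[k] = u (i + k) := by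
  refine exists_congr fun i => ⟨fun h k hk => ?_, fun h => List.ext_getElem (by simp) ?_⟩
  · simp [List.getElem_of_eq h hk]
  · intro k hk _
    simp [h k hk]

namespace isTM

variable {b m : ℕ} {u : ℕ → ZMod m}

theorem apply_eq_div_add_mod (hu : isTM b m u) (hb : 0 < b) (k : ℕ) :
    u k = u (k / b) + ((k % b : ℕ) : ZMod m) := by
  conv_lhs => rw [← Nat.div_add_mod k b]
  exact hu.2 _ _ (Nat.mod_lt _ hb)

theorem apply_pow_mul_add (hu : isTM b m u) (L n : ℕ) {k : ℕ} (hk : k < b ^ L) :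
    u (b ^ L * n + k) = u n + u k := by
  induction L generalizing n k with
  | zero =>
    obtain rfl : k = 0 := by simpa using hk
    simp [hu.1]
  | succ L ih =>
    have hb : 0 < b := Nat.pos_of_ne_zero fun h => by simp [h] at hk
    have hq : k / b < b ^ L := Nat.div_lt_of_lt_mul (by rwa [pow_succ, mul_comm] at hk)
    have hsplit : b ^ (L + 1) * n + k = b * (b ^ L * n + k / b) + k % b := by
      conv_lhs => rw [← Nat.div_add_mod k b]
      ring
    rw [hsplit, hu.2 _ _ (Nat.mod_lt _ hb), ih n hq, hu.apply_eq_div_add_mod hb k]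
    ring

theorem apply_pow_sub_one_sub (hu : isTM b m u) (L : ℕ) {k : ℕ} (hk : k < b ^ L) :
    u (b ^ L - 1 - k) = ((L * (b - 1) : ℕ) : ZMod m) - u k := by
  induction L generalizing k with
  | zero =>
    obtain rfl : k = 0 := by simpa using hk
    simp [hu.1]
  | succ L ih =>
    have hb : 0 < b := Nat.pos_of_ne_zero fun h => by simp [h] at hk
    have hq : k / b < b ^ L := Nat.div_lt_of_lt_mul (by rwa [pow_succ, mul_comm] at hk)
    have hr : k % b < b := Nat.mod_lt _ hb
    have hsplit : b ^ (L + 1) - 1 - k = b * (b ^ L - 1 - k / b) + (b - 1 - k % b) := by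
      have hdm := Nat.div_add_mod k b
      have hmul : b * (b ^ L - 1 - k / b) + b * (k / b + 1) = b * b ^ L := by
        rw [← Nat.mul_add]; congr 1; omega
      have hq1 : b * (k / b + 1) = b * (k / b) + b := Nat.mul_succ b _
      rw [pow_succ, mul_comm _ b]
      omega
    rw [hsplit, hu.2 _ _ (by omega), ih hq, hu.apply_eq_div_add_mod hb k,
      Nat.cast_sub (by omega : k % b ≤ b - 1)]
    push_cast
    ring

theorem exists_apply_eq (hu : isTM b m u) (hb : 2 ≤ b) (a : ℕ) : ∃ q, u q = a := by
  induction a with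
  | zero => exact ⟨0, by simp [hu.1]⟩
  | succ a ih =>
    obtain ⟨q, hq⟩ := ih
    exact ⟨b * q + 1, by rw [hu.2 q 1 (by omega), hq]; push_cast; rfl⟩

theorem surjective [NeZero m] (hu : isTM b m u) (hb : 2 ≤ b) : Function.Surjective u := by
  intro z
  obtain ⟨a, rfl⟩ := ZMod.natCast_zmod_surjective z
  exact hu.exists_apply_eq hb a

theorem exists_reflected_occurrence [NeZero m] (hu : isTM b m u) (hb : 2 ≤ b) (x : ZMod m)
    (i n : ℕ) : ∃ j, ∀ t < n, u (j + t) = x - u (i + (n - 1 - t)) := by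
  obtain ⟨L, hL⟩ : ∃ L, i + n < b ^ L := ⟨i + n, Nat.lt_pow_self (by omega)⟩
  obtain ⟨q, hq⟩ := hu.surjective hb (x - ((L * (b - 1) : ℕ) : ZMod m))
  refine ⟨b ^ L * q + (b ^ L - (i + n)), fun t ht => ?_⟩
  have hmirror : b ^ L - (i + n) + t = b ^ L - 1 - (i + (n - 1 - t)) := by omega
  rw [add_assoc, hu.apply_pow_mul_add L q (by omega), hq, hmirror,
    hu.apply_pow_sub_one_sub L (by omega)]
  ring

end isTM

/-- The language of `t_{b,m}` is invariant under every antimorphism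
`Ψ_x : k₁…kₙ ↦ (x−kₙ)…(x−k₁)`. -/
theorem tm_invariant_Psi (b m : ℕ) (hb : 2 ≤ b) (hm : 1 ≤ m) (u : ℕ → ZMod m)
    (hu : isTM b m u) (x : ZMod m) (w : List (ZMod m)) (hw : isFactor u w) :
    isFactor u ((w.map (fun k => x - k)).reverse) := by
  have : NeZero m := ⟨by omega⟩
  rw [isFactor_iff_getElem] at hw ⊢
  obtain ⟨i, hi⟩ := hw
  obtain ⟨j, hj⟩ := hu.exists_reflected_occurrence hb x i w.length
  refine ⟨j, fun t ht => ?_⟩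
  simp only [List.length_reverse, List.length_map] at ht
  simp only [List.getElem_reverse, List.getElem_map, List.length_map, hj t ht]
  rw [hi _ (by omega)]
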